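/- arXiv:1411.1013 — 2 statements merged into one kernel-verified Lean document; each statement's English description precedes it below -/
import Mathlib

section
/- Let b, c ∈ ℝ and define τ(s) = (b·s + c) / √(1 + (b·s + c)²). Then for every s ∈ ℝ, the function τ satisfies τ''(s)·(1 − τ(s)²) + 3 τ(s) τ'(s)² = 0. -/
noncomputable section

private lemma alg1 (b u S : ℝ) (hS : S ≠ 0) (h2 : S ^ 2 = 1 + u ^ 2) :
    b / S ^ 3 = (b * S - u * (2 * u * b / (2 * S))) / S ^ 2 := by
  field_simp
  linear_combination (-b) * h2

private lemma alg2 (b u S : ℝ) (hS : S ≠ 0) :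
    -(3 * b ^ 2 * u) / S ^ 5
      = (0 * S ^ 3 - b * (3 * S ^ 2 * (2 * u * b / (2 * S)))) / (S ^ 3) ^ 2 := by
  field_simp
  ring

private lemma alg3 (b u S : ℝ) (hS : S ≠ 0) (h2 : S ^ 2 = 1 + u ^ 2) :
    -(3 * b ^ 2 * u) / S ^ 5 * (1 - (u / S) ^ 2) + 3 * (u / S) * (b / S ^ 3) ^ 2 = 0 := by
  field_simp
  linear_combination (-3 * b ^ 2 * u) * h2

private lemma sqrt_pos' (x : ℝ) : 0 < Real.sqrt (1 + x ^ 2) := by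
  apply Real.sqrt_pos.2; positivity

private lemma sqrt_sq' (x : ℝ) : Real.sqrt (1 + x ^ 2) ^ 2 = 1 + x ^ 2 := by
  rw [Real.sq_sqrt]; positivity

private lemma hd1 (b c s : ℝ) :
    HasDerivAt (fun s => (b * s + c) / Real.sqrt (1 + (b * s + c) ^ 2))
      (b / Real.sqrt (1 + (b * s + c) ^ 2) ^ 3) s := by
  set u := b * s + c with hu
  have hu' : HasDerivAt (fun s => b * s + c) b s := by
    simpa using ((hasDerivAt_id s).const_mul b).add_const c
  have hA : HasDerivAt (fun s => 1 + (b * s + c) ^ 2) (2 * u * b) s := by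
    simpa using ((hu'.pow 2).const_add 1)
  have hS : HasDerivAt (fun s => Real.sqrt (1 + (b * s + c) ^ 2))
      (2 * u * b / (2 * Real.sqrt (1 + u ^ 2))) s := hA.sqrt (by positivity)
  have hSne : Real.sqrt (1 + u ^ 2) ≠ 0 := (sqrt_pos' u).ne'
  have := hu'.div hS hSne
  exact this.congr_deriv (alg1 b u _ hSne (sqrt_sq' u)).symm

private lemma hd2 (b c s : ℝ) :
    HasDerivAt (fun s => b / Real.sqrt (1 + (b * s + c) ^ 2) ^ 3)
      (-(3 * b ^ 2 * (b * s + c)) / Real.sqrt (1 + (b * s + c) ^ 2) ^ 5) s := by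
  set u := b * s + c with hu
  have hu' : HasDerivAt (fun s => b * s + c) b s := by
    simpa using ((hasDerivAt_id s).const_mul b).add_const c
  have hA : HasDerivAt (fun s => 1 + (b * s + c) ^ 2) (2 * u * b) s := by
    simpa using ((hu'.pow 2).const_add 1)
  have hS : HasDerivAt (fun s => Real.sqrt (1 + (b * s + c) ^ 2))
      (2 * u * b / (2 * Real.sqrt (1 + u ^ 2))) s := hA.sqrt (by positivity)
  have hSne : Real.sqrt (1 + u ^ 2) ≠ 0 := (sqrt_pos' u).ne'
  have hS3 : HasDerivAt (fun s => Real.sqrt (1 + (b * s + c) ^ 2) ^ 3)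
      (3 * Real.sqrt (1 + u ^ 2) ^ 2 * (2 * u * b / (2 * Real.sqrt (1 + u ^ 2)))) s := by
    simpa using hS.fun_pow 3
  have h3ne : Real.sqrt (1 + u ^ 2) ^ 3 ≠ 0 := pow_ne_zero _ hSne
  have := (hasDerivAt_const s b).div hS3 h3ne
  exact this.congr_deriv (alg2 b u _ hSne).symm

theorem stmt_9 (b c : ℝ)
    (τ : ℝ → ℝ)
    (hτdef : τ = fun s => (b * s + c) / Real.sqrt (1 + (b * s + c) ^ 2)) :
    ∀ s : ℝ,
      deriv (deriv τ) s * (1 - τ s ^ 2) + 3 * τ s * (deriv τ s) ^ 2 = 0 := by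
  intro s
  have hderiv : deriv τ = fun s => b / Real.sqrt (1 + (b * s + c) ^ 2) ^ 3 := by
    funext x
    rw [hτdef]
    exact (hd1 b c x).deriv
  have hderiv2 : deriv (deriv τ) s
      = -(3 * b ^ 2 * (b * s + c)) / Real.sqrt (1 + (b * s + c) ^ 2) ^ 5 := by
    rw [hderiv]
    exact (hd2 b c s).deriv
  rw [hderiv2, hderiv, hτdef]
  exact alg3 b (b * s + c) _ (sqrt_pos' _).ne' (sqrt_sq' _)
end
end

section
/- Let I ⊆ ℝ be an open interval, let α : ℝ → ℝ³ be smooth, and let T, N, B : ℝ → ℝ³ and τ : ℝ → ℝ be smooth maps such that on I: α' = T, T' = N, N' = T + τ B, B' = −τ N, and for all s ∈ I: g(T(s),T(s)) = −1, g(N(s),N(s)) = 1, g(B(s),B(s)) = 1, g(T(s),N(s)) = 0, g(T(s),B(s)) = 0, g(N(s),B(s)) = 0, and τ(s)² ≠ 1 for all s ∈ I. Then the following are equivalent: (i) there exists a vector u ∈ ℝ³ with u ≠ 0 such that the function s ↦ g(N(s), u) is constant on I; (ii) det(α⁽³⁾(s), α⁽⁴⁾(s), α⁽⁵⁾(s))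 = 0 for all s ∈ I. -/
noncomputable section

/-- The Lorentzian inner product on Minkowski 3-space `E₁³`. -/
def lg (x y : Fin 3 → ℝ) : ℝ := -(x 0 * y 0) + x 1 * y 1 + x 2 * y 2

/-- Determinant of the 3×3 matrix with rows `u`, `v`, `w`. -/
def det3 (u v w : Fin 3 → ℝ) : ℝ := Matrix.det (Matrix.of ![u, v, w])

lemma det3_eq (u v w : Fin 3 → ℝ) : det3 u v w =
    u 0 * (v 1 * w 2 - v 2 * w 1) - u 1 * (v 0 * w 2 - v 2 * w 0)
      + u 2 * (v 0 * w 1 - v 1 * w 0) := by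
  simp [det3, Matrix.det_fin_three]; ring

lemma gram (x y z : Fin 3 → ℝ) : det3 x y z ^ 2 =
    -(lg x x * (lg y y * lg z z - lg y z * lg y z)
      - lg x y * (lg x y * lg z z - lg y z * lg x z)
      + lg x z * (lg x y * lg y z - lg y y * lg x z)) := by
  simp only [det3_eq, lg]; ring

lemma det3_combo (x y z : Fin 3 → ℝ) (t t' t'' : ℝ) :
    det3 (x + t • z) ((1 - t ^ 2) • y + t' • z)
      ((1 - t ^ 2) • x + (-(3 * t * t')) • y + ((1 - t ^ 2) * t + t'') • z)
    = ((1 - t ^ 2) * t'' + 3 * t * t' ^ 2) * det3 x y z := by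
  simp only [det3_eq, Pi.add_apply, Pi.smul_apply, smul_eq_mul]; ring

lemma const_of_hasDerivAt_zero {E : Type*} [NormedAddCommGroup E] [NormedSpace ℝ E]
    {I : Set ℝ} (hIopen : IsOpen I) (hconv : Convex ℝ I) {f : ℝ → E}
    (hf : ∀ s ∈ I, HasDerivAt f 0 s) {x y : ℝ} (hx : x ∈ I) (hy : y ∈ I) : f x = f y := by
  apply hconv.is_const_of_fderivWithin_eq_zero
    (fun s hs => (hf s hs).differentiableAt.differentiableWithinAt) _ hx hy
  intro s hs
  rw [fderivWithin_of_isOpen hIopen hs]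
  have h0 : (ContinuousLinearMap.smulRight (1 : ℝ →L[ℝ] ℝ) (0 : E)) = 0 := by
    ext; simp
  have : HasFDerivAt f (0 : ℝ →L[ℝ] E) s := h0 ▸ (hf s hs).hasFDerivAt
  exact this.fderiv

lemma deriv_congr_on {E : Type*} [NormedAddCommGroup E] [NormedSpace ℝ E]
    {I : Set ℝ} (hIopen : IsOpen I) {f g : ℝ → E} (h : ∀ s ∈ I, f s = g s)
    {s : ℝ} (hs : s ∈ I) : deriv f s = deriv g s :=
  Filter.EventuallyEq.deriv_eq (Filter.eventuallyEq_of_mem (hIopen.mem_nhds hs) h)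

theorem stmt_18 (I : Set ℝ) (hIopen : IsOpen I) (hIconn : I.OrdConnected)
    (α T N B : ℝ → (Fin 3 → ℝ)) (τ : ℝ → ℝ)
    (hα : ContDiff ℝ (⊤ : ℕ∞) α) (hT : ContDiff ℝ (⊤ : ℕ∞) T)
    (hN : ContDiff ℝ (⊤ : ℕ∞) N) (hB : ContDiff ℝ (⊤ : ℕ∞) B)
    (hτ : ContDiff ℝ (⊤ : ℕ∞) τ)
    (hα' : ∀ s ∈ I, deriv α s = T s)
    (hT' : ∀ s ∈ I, deriv T s = N s)
    (hN' : ∀ s ∈ I, deriv N s = T s + τ s • B s)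
    (hB' : ∀ s ∈ I, deriv B s = (-(τ s)) • N s)
    (hTT : ∀ s ∈ I, lg (T s) (T s) = -1)
    (hNN : ∀ s ∈ I, lg (N s) (N s) = 1)
    (hBB : ∀ s ∈ I, lg (B s) (B s) = 1)
    (hTN : ∀ s ∈ I, lg (T s) (N s) = 0)
    (hTB : ∀ s ∈ I, lg (T s) (B s) = 0)
    (hNB : ∀ s ∈ I, lg (N s) (B s) = 0)
    (hτ1 : ∀ s ∈ I, τ s ^ 2 ≠ 1) :
    (∃ u : Fin 3 → ℝ, u ≠ 0 ∧ ∃ k : ℝ, ∀ s ∈ I, lg (N s) u = k) ↔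
      (∀ s ∈ I,
        det3 (iteratedDeriv 3 α s) (iteratedDeriv 4 α s) (iteratedDeriv 5 α s) = 0) := by
  have hconv : Convex ℝ I := convex_iff_ordConnected.mpr hIconn
  have dT : Differentiable ℝ T := hT.differentiable (by simp)
  have dN : Differentiable ℝ N := hN.differentiable (by simp)
  have dB : Differentiable ℝ B := hB.differentiable (by simp)
  have dτ : Differentiable ℝ τ := hτ.differentiable (by simp)
  have cτ' : ContDiff ℝ (⊤ : ℕ∞) (deriv τ) := (contDiff_infty_iff_deriv.mp hτ).2
  have dτ' : Differentiable ℝ (deriv τ) := cτ'.differentiable (by simp)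
  have cN' : ContDiff ℝ (⊤ : ℕ∞) (deriv N) := (contDiff_infty_iff_deriv.mp hN).2
  have dN' : Differentiable ℝ (deriv N) := cN'.differentiable (by simp)
  have cN'' : ContDiff ℝ (⊤ : ℕ∞) (deriv (deriv N)) := (contDiff_infty_iff_deriv.mp cN').2
  have dN'' : Differentiable ℝ (deriv (deriv N)) := cN''.differentiable (by simp)
  -- iterated derivatives of α on I
  have e1 : ∀ s ∈ I, iteratedDeriv 1 α s = T s := by
    intro s hs; rw [iteratedDeriv_one]; exact hα' s hs
  have e2 : ∀ s ∈ I, iteratedDeriv 2 α s = N s := by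
    intro s hs
    have : iteratedDeriv 2 α = deriv (iteratedDeriv 1 α) := iteratedDeriv_succ
    rw [this, deriv_congr_on hIopen e1 hs]; exact hT' s hs
  have e3 : ∀ s ∈ I, iteratedDeriv 3 α s = deriv N s := by
    intro s hs
    have : iteratedDeriv 3 α = deriv (iteratedDeriv 2 α) := iteratedDeriv_succ
    rw [this, deriv_congr_on hIopen e2 hs]
  have e4 : ∀ s ∈ I, iteratedDeriv 4 α s = deriv (deriv N) s := by
    intro s hs
    have : iteratedDeriv 4 α = deriv (iteratedDeriv 3 α) := iteratedDeriv_succ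
    rw [this, deriv_congr_on hIopen e3 hs]
  have e5 : ∀ s ∈ I, iteratedDeriv 5 α s = deriv (deriv (deriv N)) s := by
    intro s hs
    have : iteratedDeriv 5 α = deriv (iteratedDeriv 4 α) := iteratedDeriv_succ
    rw [this, deriv_congr_on hIopen e4 hs]
  -- Frenet frame HasDerivAt facts on I
  have hTs : ∀ s ∈ I, HasDerivAt T (N s) s := fun s hs => hT' s hs ▸ (dT s).hasDerivAt
  have hNs : ∀ s ∈ I, HasDerivAt N (T s + τ s • B s) s := fun s hs => hN' s hs ▸ (dN s).hasDerivAt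
  have hBs : ∀ s ∈ I, HasDerivAt B ((-(τ s)) • N s) s := fun s hs => hB' s hs ▸ (dB s).hasDerivAt
  have hτs : ∀ s : ℝ, HasDerivAt τ (deriv τ s) s := fun s => (dτ s).hasDerivAt
  have hτ's : ∀ s : ℝ, HasDerivAt (deriv τ) (deriv (deriv τ) s) s := fun s => (dτ' s).hasDerivAt
  -- second derivative of N on I
  have hD2 : ∀ s ∈ I, deriv (deriv N) s = (1 - τ s ^ 2) • N s + deriv τ s • B s := by
    intro s hs
    rw [deriv_congr_on hIopen hN' hs]
    have h1 : HasDerivAt (fun t => T t + τ t • B t)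
        (N s + (τ s • ((-(τ s)) • N s) + deriv τ s • B s)) s :=
      (hTs s hs).add ((hτs s).smul (hBs s hs))
    rw [h1.deriv]
    ext i
    simp only [Pi.add_apply, Pi.smul_apply, smul_eq_mul]
    ring
  -- third derivative of N on I
  have hD3 : ∀ s ∈ I, deriv (deriv (deriv N)) s =
      (1 - τ s ^ 2) • T s + (-(3 * τ s * deriv τ s)) • N s
        + ((1 - τ s ^ 2) * τ s + deriv (deriv τ) s) • B s := by
    intro s hs
    rw [deriv_congr_on hIopen hD2 hs]
    have hcoef : HasDerivAt (fun t => 1 - τ t ^ 2)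
        (0 - (2 : ℕ) * τ s ^ (2 - 1) * deriv τ s) s :=
      (hasDerivAt_const s (1 : ℝ)).sub ((hτs s).pow 2)
    have h1 : HasDerivAt (fun t => (1 - τ t ^ 2) • N t + deriv τ t • B t)
        (((1 - τ s ^ 2) • (T s + τ s • B s) + (0 - (2 : ℕ) * τ s ^ (2 - 1) * deriv τ s) • N s)
          + (deriv τ s • ((-(τ s)) • N s) + deriv (deriv τ) s • B s)) s :=
      (hcoef.smul (hNs s hs)).add ((hτ's s).smul (hBs s hs))
    rw [h1.deriv]
    ext i
    simp only [Pi.add_apply, Pi.smul_apply, smul_eq_mul, Nat.cast_ofNat, pow_one]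
    ring
  constructor
  · -- slant helix ⇒ det vanishes
    rintro ⟨u, hu0, k, hk⟩ s hs
    rw [e3 s hs, e4 s hs, e5 s hs]
    have hL : ∀ (f : ℝ → Fin 3 → ℝ), Differentiable ℝ f → ∀ s : ℝ,
        HasDerivAt (fun t => lg (f t) u) (lg (deriv f s) u) s := by
      intro f hf s
      have h := fun i => hasDerivAt_pi.mp (hf s).hasDerivAt i
      unfold lg
      exact ((((h 0).mul_const (u 0)).neg).add ((h 1).mul_const (u 1))).add
        ((h 2).mul_const (u 2))
    have z1 : ∀ s ∈ I, lg (deriv N s) u = 0 := by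
      intro s hs
      have h1 : deriv (fun t => lg (N t) u) s = deriv (fun _ : ℝ => k) s :=
        deriv_congr_on hIopen hk hs
      rw [(hL N dN s).deriv] at h1
      rw [h1, deriv_const]
    have z2 : ∀ s ∈ I, lg (deriv (deriv N) s) u = 0 := by
      intro s hs
      have h1 : deriv (fun t => lg (deriv N t) u) s = deriv (fun _ : ℝ => (0 : ℝ)) s :=
        deriv_congr_on hIopen z1 hs
      rw [(hL (deriv N) dN' s).deriv] at h1
      rw [h1, deriv_const]
    have z3 : ∀ s ∈ I, lg (deriv (deriv (deriv N)) s) u = 0 := by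
      intro s hs
      have h1 : deriv (fun t => lg (deriv (deriv N) t) u) s = deriv (fun _ : ℝ => (0 : ℝ)) s :=
        deriv_congr_on hIopen z2 hs
      rw [(hL (deriv (deriv N)) dN'' s).deriv] at h1
      rw [h1, deriv_const]
    by_contra hdne
    set v1 := deriv N s
    set v2 := deriv (deriv N) s
    set v3 := deriv (deriv (deriv N)) s
    set M : Matrix (Fin 3) (Fin 3) ℝ := Matrix.of ![v1, v2, v3] with hM
    have hMdet : IsUnit M.det := isUnit_iff_ne_zero.mpr hdne
    set w : Fin 3 → ℝ := ![-(u 0), u 1, u 2] with hw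
    have hd1 : dotProduct v1 w = 0 := by
      have hz := z1 s hs
      simp only [lg] at hz
      simp only [hw, dotProduct, Fin.sum_univ_three, Matrix.cons_val_zero,
        Matrix.cons_val_one, Matrix.head_cons, Matrix.cons_val_two, Matrix.tail_cons]
      linarith
    have hd2 : dotProduct v2 w = 0 := by
      have hz := z2 s hs
      simp only [lg] at hz
      simp only [hw, dotProduct, Fin.sum_univ_three, Matrix.cons_val_zero,
        Matrix.cons_val_one, Matrix.head_cons, Matrix.cons_val_two, Matrix.tail_cons]
      linarith
    have hd3 : dotProduct v3 w = 0 := by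
      have hz := z3 s hs
      simp only [lg] at hz
      simp only [hw, dotProduct, Fin.sum_univ_three, Matrix.cons_val_zero,
        Matrix.cons_val_one, Matrix.head_cons, Matrix.cons_val_two, Matrix.tail_cons]
      linarith
    have hmv : M.mulVec w = 0 := by
      rw [hM, Matrix.cons_mulVec, Matrix.cons_mulVec, Matrix.cons_mulVec, hd1, hd2, hd3]
      funext i
      fin_cases i <;> simp [Matrix.mulVec]
    have hw0 : w = 0 := by
      have h1 : M⁻¹.mulVec (M.mulVec w) = w := by
        rw [Matrix.mulVec_mulVec, Matrix.nonsing_inv_mul M hMdet, Matrix.one_mulVec]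
      rw [hmv, Matrix.mulVec_zero] at h1
      exact h1.symm
    apply hu0
    funext i
    have h0 := congrFun hw0 0
    have h1 := congrFun hw0 1
    have h2 := congrFun hw0 2
    simp only [hw, Matrix.cons_val_zero, Matrix.cons_val_one, Matrix.head_cons,
      Matrix.cons_val_two, Matrix.tail_cons, Pi.zero_apply] at h0 h1 h2
    fin_cases i
    · simpa using neg_eq_zero.mp h0
    · exact h1
    · exact h2
  · -- det vanishes ⇒ slant helix
    intro hdet
    rcases Set.eq_empty_or_nonempty I with hI0 | ⟨s₀, hs₀⟩
    · exact ⟨![1, 0, 0], by intro h; simpa using congrFun h 0, 0, fun s hs => by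
        rw [hI0] at hs; exact absurd hs (Set.notMem_empty s)⟩
    have hE : ∀ s ∈ I, (1 - τ s ^ 2) * deriv (deriv τ) s + 3 * τ s * (deriv τ s) ^ 2 = 0 := by
      intro s hs
      have hne : det3 (T s) (N s) (B s) ≠ 0 := by
        intro h0
        have hg := gram (T s) (N s) (B s)
        rw [h0, hTT s hs, hNN s hs, hBB s hs, hTN s hs, hTB s hs, hNB s hs] at hg
        norm_num at hg
      have hd := hdet s hs
      rw [e3 s hs, e4 s hs, e5 s hs, hN' s hs, hD2 s hs, hD3 s hs, det3_combo] at hd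
      rcases mul_eq_zero.mp hd with h | h
      · exact h
      · exact absurd h hne
    have h1τ : ∀ s ∈ I, (1 : ℝ) - τ s ^ 2 ≠ 0 := fun s hs =>
      sub_ne_zero.mpr (Ne.symm (hτ1 s hs))
    by_cases hflat : ∀ s ∈ I, deriv τ s = 0
    · -- τ constant : u = τ • T + B
      set w : ℝ → Fin 3 → ℝ := fun s => τ s • T s + B s with hwdef
      have hw' : ∀ s ∈ I, HasDerivAt w 0 s := by
        intro s hs
        have h1 : HasDerivAt w ((τ s • N s + deriv τ s • T s) + (-(τ s)) • N s) s :=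
          ((hτs s).smul (hTs s hs)).add (hBs s hs)
        convert h1 using 1
        rw [hflat s hs]
        ext i
        simp only [Pi.add_apply, Pi.smul_apply, smul_eq_mul, Pi.zero_apply]
        ring
      have hwc : ∀ s ∈ I, w s = w s₀ := fun s hs =>
        const_of_hasDerivAt_zero hIopen hconv hw' hs hs₀
      refine ⟨w s₀, ?_, 0, ?_⟩
      · intro h0
        have hval : lg (w s₀) (w s₀) = 1 - τ s₀ ^ 2 := by
          simp only [hwdef, lg, Pi.add_apply, Pi.smul_apply, smul_eq_mul]
          have t1 := hTT s₀ hs₀; have t2 := hTB s₀ hs₀; have t3 := hBB s₀ hs₀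
          simp only [lg] at t1 t2 t3
          linear_combination (τ s₀ ^ 2) * t1 + (2 * τ s₀) * t2 + t3
        rw [h0] at hval
        simp only [lg, Pi.zero_apply] at hval
        exact h1τ s₀ hs₀ (by linarith)
      · intro s hs
        rw [← hwc s hs]
        simp only [hwdef, lg, Pi.add_apply, Pi.smul_apply, smul_eq_mul]
        have t1 := hTN s hs; have t2 := hNB s hs
        simp only [lg] at t1 t2
        linear_combination τ s * t1 + t2
    · -- τ' never zero case
      push_neg at hflat
      obtain ⟨s₁, hs₁, hτ'1⟩ := hflat
      -- m = τ'^2/(1-τ^2)^3 is constant on I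
      set m : ℝ → ℝ := fun s => (deriv τ s) ^ 2 / (1 - τ s ^ 2) ^ 3 with hmdef
      have hm : ∀ s ∈ I, HasDerivAt m 0 s := by
        intro s hs
        have hnum : HasDerivAt (fun t => (deriv τ t) ^ 2)
            ((2 : ℕ) * deriv τ s ^ (2 - 1) * deriv (deriv τ) s) s := (hτ's s).pow 2
        have hin : HasDerivAt (fun t => 1 - τ t ^ 2)
            (0 - (2 : ℕ) * τ s ^ (2 - 1) * deriv τ s) s :=
          (hasDerivAt_const s (1 : ℝ)).sub ((hτs s).pow 2)
        have hden : HasDerivAt (fun t => (1 - τ t ^ 2) ^ 3)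
            ((3 : ℕ) * (1 - τ s ^ 2) ^ (3 - 1) * (0 - (2 : ℕ) * τ s ^ (2 - 1) * deriv τ s)) s :=
          hin.pow 3
        have hdiv := hnum.div hden (pow_ne_zero 3 (h1τ s hs))
        refine hdiv.congr_deriv (Eq.symm ?_)
        rw [eq_comm, div_eq_zero_iff]
        left
        have hEs := hE s hs
        push_cast
        linear_combination (2 * deriv τ s * (1 - τ s ^ 2) ^ 2) * hEs
      have hmc : ∀ s ∈ I, m s = m s₁ := fun s hs =>
        const_of_hasDerivAt_zero hIopen hconv hm hs hs₁
      have hτ'ne : ∀ s ∈ I, deriv τ s ≠ 0 := by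
        intro s hs h0
        have h1 : m s = 0 := by simp [hmdef, h0]
        have h2 : m s₁ ≠ 0 :=
          div_ne_zero (pow_ne_zero 2 hτ'1) (pow_ne_zero 3 (h1τ s₁ hs₁))
        exact h2 (by rw [← hmc s hs, h1])
      -- build the axis
      set c : ℝ → ℝ := fun s => -((1 - τ s ^ 2) / deriv τ s) with hcdef
      have hc' : ∀ s ∈ I, HasDerivAt c (-(τ s)) s := by
        intro s hs
        have hin : HasDerivAt (fun t => 1 - τ t ^ 2)
            (0 - (2 : ℕ) * τ s ^ (2 - 1) * deriv τ s) s :=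
          (hasDerivAt_const s (1 : ℝ)).sub ((hτs s).pow 2)
        have hdiv := (hin.div (hτ's s) (hτ'ne s hs)).neg
        refine hdiv.congr_deriv (Eq.symm ?_)
        have hEs := hE s hs
        have hne := hτ'ne s hs
        field_simp
        push_cast
        linear_combination -hEs
      set w : ℝ → Fin 3 → ℝ := fun s => (τ s * c s) • T s + N s + c s • B s with hwdef
      have hw' : ∀ s ∈ I, HasDerivAt w 0 s := by
        intro s hs
        have ha : HasDerivAt (fun t => τ t * c t)
            (deriv τ s * c s + τ s * (-(τ s))) s := (hτs s).mul (hc' s hs)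
        have h1 : HasDerivAt w
            ((((τ s * c s) • N s + (deriv τ s * c s + τ s * (-(τ s))) • T s)
              + (T s + τ s • B s))
              + ((c s • ((-(τ s)) • N s)) + (-(τ s)) • B s)) s :=
          ((ha.smul (hTs s hs)).add (hNs s hs)).add ((hc' s hs).smul (hBs s hs))
        convert h1 using 1
        have hcval : c s * deriv τ s = -(1 - τ s ^ 2) := by
          rw [hcdef]
          field_simp
          rw [mul_div_cancel_right₀ _ (hτ'ne s hs)]
        ext i
        simp only [Pi.add_apply, Pi.smul_apply, smul_eq_mul, Pi.zero_apply]
        linear_combination (-(T s i)) * hcval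
      have hwc : ∀ s ∈ I, w s = w s₀ := fun s hs =>
        const_of_hasDerivAt_zero hIopen hconv hw' hs hs₀
      have hlgw : ∀ s ∈ I, lg (N s) (w s) = 1 := by
        intro s hs
        simp only [hwdef, lg, Pi.add_apply, Pi.smul_apply, smul_eq_mul]
        have t1 := hTN s hs; have t2 := hNN s hs; have t3 := hNB s hs
        simp only [lg] at t1 t2 t3
        linear_combination (τ s * c s) * t1 + t2 + c s * t3
      refine ⟨w s₀, ?_, 1, ?_⟩
      · intro h0
        have := hlgw s₀ hs₀
        rw [← hwc s₀ hs₀] at this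
        rw [hwc s₀ hs₀, h0] at this
        simp [lg] at this
      · intro s hs
        rw [← hwc s hs]
        exact hlgw s hs
end
end
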